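/- arXiv:2307.03870 — 2 statements merged into one kernel-verified Lean document; each statement's English description precedes it below -/
import Mathlib

section
/- Let S be an EP-EFA with m states and step-length K (the maximum step-length of its symbolic transitions). Then every flat marked data string u ∈ L_fmd(S) with |u| > (m − 1)·K admits a factorization u = p·q·r with q nonempty such that p·q·q·r ∈ L_fmd(S). -/
attribute [local instance] Classical.propDecidable

universe u v w

/-- A symbolic transition of an EP-EFA: source and target states, event tag,
step-length, and a guard given by its denotation (a set of parameter tuples
of length `len`). -/
structure SymTrans (Q : Type u) (E : Type v) (X : Type w) where
  src : Q
  tgt : Q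
  tag : E
  len : ℕ
  guard : Set (List X)
  guard_len : ∀ l ∈ guard, l.length = len

/-- An Event-Parameters Extended Finite Automaton (EP-EFA): initial states,
marked states, and a set of symbolic transitions. -/
structure EPEFA (Q : Type u) (E : Type v) (X : Type w) where
  init : Set Q
  marked : Set Q
  trans : Set (SymTrans Q E X)

variable {Q : Type u} {E : Type v} {X : Type w}

/-- The flat data string of a parameterized string: the concatenation of all
parameter values in order. -/
def flatData (u : List (E × List X)) : List X := (u.map Prod.snd).flatten

/-- The reverse of a parameterized string: events in reverse order, each
parameter tuple reversed. -/
def strRev (u : List (E × List X)) : List (E × List X) :=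
  (u.map fun ev => (ev.1, ev.2.reverse)).reverse

/-- The reverse of a data string / observation: tuples in reverse order, each
tuple reversed. -/
def obsRev (w : List (List X)) : List (List X) := (w.map List.reverse).reverse

/-- The observation `θ(D(u))` of a parameterized string `u`, determined by the
observability set `ϑ`: strip event tags, delete unobservable parameter values,
drop empty tuples. -/
noncomputable def obsOf (ϑ : Set X) (u : List (E × List X)) : List (List X) :=
  ((u.map Prod.snd).map fun l => l.filter fun a => a ∈ ϑ).filter fun l => l ≠ []

/-- A parameterized event `ev` triggers a concrete transition from `q` to `q'`. -/
def EPEFA.Step (S : EPEFA Q E X) (q : Q) (ev : E × List X) (q' : Q) : Prop :=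
  ∃ t ∈ S.trans, t.src = q ∧ t.tgt = q' ∧ t.tag = ev.1 ∧ ev.2 ∈ t.guard

/-- `S.Path q u q'` : the parameterized string `u` labels a chain of concrete
transitions from `q` to `q'` (with `q →ε q` always). -/
inductive EPEFA.Path (S : EPEFA Q E X) : Q → List (E × List X) → Q → Prop
  | nil (q : Q) : EPEFA.Path S q [] q
  | cons {q q' q'' : Q} {ev : E × List X} {u : List (E × List X)} :
      S.Step q ev q' → EPEFA.Path S q' u q'' → EPEFA.Path S q (ev :: u) q''

/-- The language between a set of source states and a set of target states. -/
def EPEFA.LBtw (S : EPEFA Q E X) (Q1 Q2 : Set Q) : Set (List (E × List X)) :=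
  {u | ∃ q1 ∈ Q1, ∃ q2 ∈ Q2, S.Path q1 u q2}

/-- The generated language `L(S)`. -/
def EPEFA.Lang (S : EPEFA Q E X) : Set (List (E × List X)) :=
  S.LBtw S.init Set.univ

/-- The marked language `L_m(S)`. -/
def EPEFA.LangM (S : EPEFA Q E X) : Set (List (E × List X)) :=
  S.LBtw S.init S.marked

/-- The flat marked data language `L_fmd(S)`. -/
def EPEFA.Lfmd (S : EPEFA Q E X) : Set (List X) := flatData '' S.LangM

/-- The set of observations `Θ(S)`. -/
def EPEFA.ThetaSet (S : EPEFA Q E X) (ϑ : Set X) : Set (List (List X)) :=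
  obsOf ϑ '' S.Lang

/-- The state estimation `Est^S(w)`. -/
def EPEFA.Est (S : EPEFA Q E X) (ϑ : Set X) (w : List (List X)) : Set Q :=
  {q | ∃ q0 ∈ S.init, ∃ u, S.Path q0 u q ∧ obsOf ϑ u = w}

/-- The reverse of a symbolic transition: source and target swapped, guard
denotation reversed tuple-wise. -/
def SymTrans.rev (t : SymTrans Q E X) : SymTrans Q E X where
  src := t.tgt
  tgt := t.src
  tag := t.tag
  len := t.len
  guard := {l | l.reverse ∈ t.guard}
  guard_len := fun l hl => by simpa using t.guard_len l.reverse hl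

/-- The reverse EP-EFA `Sʳ`: all states initial, reversed transitions. -/
def EPEFA.rev (S : EPEFA Q E X) : EPEFA Q E X where
  init := Set.univ
  marked := S.init
  trans := SymTrans.rev '' S.trans

/-- Current-state opacity of `S` w.r.t. secret states `Qs`, non-secret states
`Qns` and the observation function determined by `ϑ`. -/
def EPEFA.CSOpaque (S : EPEFA Q E X) (ϑ : Set X) (Qs Qns : Set Q) : Prop :=
  ∀ u ∈ S.LBtw S.init Qs, ∃ v ∈ S.LBtw S.init Qns, obsOf ϑ u = obsOf ϑ v

/-- Initial-state opacity of `S` w.r.t. secret initial states `Qs`, non-secret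
initial states `Qns` and the observation function determined by `ϑ`. -/
def EPEFA.ISOpaque (S : EPEFA Q E X) (ϑ : Set X) (Qs Qns : Set Q) : Prop :=
  ∀ u ∈ S.LBtw Qs Set.univ, ∃ v ∈ S.LBtw Qns Set.univ, obsOf ϑ u = obsOf ϑ v

/-- Infinite-step opacity of `S` w.r.t. secret states `Qs`, non-secret states
`Qns` and the observation function determined by `ϑ`: every run from an
initial state through a secret state is matched, observation-wise (both the
prefix up to the secret state and the suffix), by a run through a non-secret
state. -/
def EPEFA.InfSOpaque (S : EPEFA Q E X) (ϑ : Set X) (Qs Qns : Set Q) : Prop :=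
  ∀ q0 ∈ S.init, ∀ qs ∈ Qs, ∀ (q : Q) (u u2 : List (E × List X)),
    S.Path q0 u qs → S.Path qs u2 q →
    ∃ q0' ∈ S.init, ∃ qn ∈ Qns, ∃ (q' : Q) (v v2 : List (E × List X)),
      S.Path q0' v qn ∧ S.Path qn v2 q' ∧
      obsOf ϑ u = obsOf ϑ v ∧ obsOf ϑ u2 = obsOf ϑ v2

/-
A marked run `w` with `fD(w) = u` has at most `K` parameter values per event, so
`|u| > (m - 1) K` forces at least `m` events with nonempty parameter tuple. The `m` states in
which these events fire, together with the final state, are `m + 1` states of the run, so two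
coincide: the run contains a loop carrying a nonempty parameter tuple, and running this loop
twice pumps a nonempty factor of `u`.
-/

theorem flatData_append (u v : List (E × List X)) :
    flatData (u ++ v) = flatData u ++ flatData v := by
  simp [flatData]

theorem flatData_ne_nil {u : List (E × List X)} {ev : E × List X} (hev : ev ∈ u)
    (hne : ev.2 ≠ []) : flatData u ≠ [] := by
  simpa [flatData] using ⟨ev.2, ⟨ev.1, hev⟩, hne⟩

theorem length_flatData_le {K : ℕ} {u : List (E × List X)} (hK : ∀ ev ∈ u, ev.2.length ≤ K) :
    (flatData u).length ≤ u.countP (fun ev => !ev.2.isEmpty) * K := by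
  induction u with
  | nil => simp [flatData]
  | cons ev u ih =>
    have hev := hK ev List.mem_cons_self
    have hu := ih fun e he => hK e (List.mem_cons_of_mem _ he)
    simp only [flatData, List.map_cons, List.flatten_cons, List.length_append,
      List.countP_cons] at hu ⊢
    rcases h : ev.2 with _ | ⟨a, l⟩
    · simpa using hu
    · rw [h] at hev
      simp only [List.isEmpty_cons, Bool.not_false, if_true]
      nlinarith

namespace EPEFA

variable {S : EPEFA Q E X}

theorem Path.append {q q' q'' : Q} {u v : List (E × List X)}
    (hu : S.Path q u q') (hv : S.Path q' v q'') : S.Path q (u ++ v) q'' := by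
  induction hu with
  | nil => exact hv
  | cons hs _ ih => exact .cons hs (ih hv)

theorem Path.length_snd_le {K : ℕ} (hK : ∀ t ∈ S.trans, t.len ≤ K) {q q' : Q}
    {u : List (E × List X)} (h : S.Path q u q') : ∀ ev ∈ u, ev.2.length ≤ K := by
  induction h with
  | nil => simp
  | cons hs _ ih =>
    rintro ev (_ | ⟨_, hev⟩)
    · obtain ⟨t, ht, -, -, -, hg⟩ := hs
      exact t.guard_len _ hg ▸ hK t ht
    · exact ih ev hev

def HasLoop (S : EPEFA Q E X) (p : E × List X → Bool) (q : Q) (u : List (E × List X))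
    (q' : Q) : Prop :=
  ∃ s u₁ u₂ u₃, u = u₁ ++ u₂ ++ u₃ ∧ S.Path q u₁ s ∧ S.Path s u₂ s ∧ S.Path s u₃ q' ∧
    ∃ ev ∈ u₂, p ev

theorem HasLoop.cons {p : E × List X → Bool} {q q₁ q' : Q} {ev : E × List X}
    {u : List (E × List X)} (hs : S.Step q ev q₁) (h : S.HasLoop p q₁ u q') :
    S.HasLoop p q (ev :: u) q' := by
  obtain ⟨s, u₁, u₂, u₃, rfl, h₁, h₂, h₃, hp⟩ := h
  exact ⟨s, ev :: u₁, u₂, u₃, rfl, .cons hs h₁, h₂, h₃, hp⟩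

/- `V` collects the states in which a `p`-event has fired so far; reaching one of them again
closes a loop containing a `p`-event. Each `p`-event outside `V` enlarges `V`, so once
`V.card + u.countP p` reaches `card Q`, a state of `V` is reached at the latest at the end. -/
theorem Path.exists_mem_or_hasLoop [Fintype Q] (p : E × List X → Bool) {q q' : Q}
    {u : List (E × List X)} (h : S.Path q u q') (V : Finset Q)
    (hV : Fintype.card Q ≤ V.card + u.countP p) :
    (∃ s ∈ V, ∃ u₁ u₂, u = u₁ ++ u₂ ∧ S.Path q u₁ s ∧ S.Path s u₂ q') ∨ S.HasLoop p q u q' := by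
  induction h generalizing V with
  | nil q =>
    have hV : V = Finset.univ :=
      Finset.eq_univ_of_card V (le_antisymm V.card_le_univ (by simpa using hV))
    exact .inl ⟨q, hV ▸ Finset.mem_univ q, [], [], rfl, .nil q, .nil q⟩
  | @cons q q₁ q' ev u hs ht ih =>
    by_cases hqV : q ∈ V
    · exact .inl ⟨q, hqV, [], ev :: u, rfl, .nil q, .cons hs ht⟩
    cases hp : p ev
    · simp only [List.countP_cons, hp, reduceIte, Bool.false_eq_true, add_zero] at hV
      rcases ih V hV with ⟨s, hs', u₁, u₂, rfl, h₁, h₂⟩ | hl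
      · exact .inl ⟨s, hs', ev :: u₁, u₂, rfl, .cons hs h₁, h₂⟩
      · exact .inr (hl.cons hs)
    · simp only [List.countP_cons, hp, reduceIte] at hV
      have hV' : Fintype.card Q ≤ (insert q V).card + u.countP p := by
        rw [Finset.card_insert_of_notMem hqV]; omega
      rcases ih (insert q V) hV' with ⟨s, hs', u₁, u₂, rfl, h₁, h₂⟩ | hl
      · rcases Finset.mem_insert.mp hs' with rfl | hsV
        · exact .inr ⟨s, [], ev :: u₁, u₂, rfl, .nil s, .cons hs h₁, h₂, ev,
            List.mem_cons_self, hp⟩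
        · exact .inl ⟨s, hsV, ev :: u₁, u₂, rfl, .cons hs h₁, h₂⟩
      · exact .inr (hl.cons hs)

theorem Path.hasLoop [Fintype Q] (p : E × List X → Bool) {q q' : Q} {u : List (E × List X)}
    (h : S.Path q u q') (hu : Fintype.card Q ≤ u.countP p) : S.HasLoop p q u q' :=
  (h.exists_mem_or_hasLoop p ∅ (by simpa using hu)).resolve_left (by simp)

theorem HasLoop.exists_pumped_path {p : E × List X → Bool} {q q' : Q} {u : List (E × List X)}
    (h : S.HasLoop p q u q') :
    ∃ u₁ u₂ u₃, u = u₁ ++ u₂ ++ u₃ ∧ S.Path q (u₁ ++ u₂ ++ u₂ ++ u₃) q' ∧ ∃ ev ∈ u₂, p ev := by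
  obtain ⟨s, u₁, u₂, u₃, rfl, h₁, h₂, h₃, hp⟩ := h
  refine ⟨u₁, u₂, u₃, rfl, ?_, hp⟩
  simpa only [List.append_assoc] using h₁.append (h₂.append (h₂.append h₃))

end EPEFA

/-- Pumping lemma for EP-EFAs: if `S` has `m` states and step-length (at most)
`K`, then every flat marked data string of length greater than `(m-1)·K` can be
factored as `p ++ q ++ r` with `q` nonempty such that `p ++ q ++ q ++ r` is
again a flat marked data string of `S`. -/
theorem epefa_pumping [Fintype Q] (S : EPEFA Q E X) (m K : ℕ)
    (hm : Fintype.card Q = m) (hK : ∀ t ∈ S.trans, t.len ≤ K)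
    (u : List X) (hu : u ∈ S.Lfmd) (hlen : (m - 1) * K < u.length) :
    ∃ p q r : List X, q ≠ [] ∧ u = p ++ q ++ r ∧ p ++ q ++ q ++ r ∈ S.Lfmd := by
  obtain ⟨w, ⟨q₀, hq₀, qₘ, hqₘ, hw⟩, rfl⟩ := hu
  set n := w.countP fun ev => !ev.2.isEmpty
  have hbound : (flatData w).length ≤ n * K := length_flatData_le (hw.length_snd_le hK)
  have hn : m ≤ n := by
    have := Nat.lt_of_mul_lt_mul_right (hlen.trans_le hbound)
    omega
  obtain ⟨w₁, w₂, w₃, rfl, hpump, ev, hev, hne⟩ := (hw.hasLoop _ (hm ▸ hn)).exists_pumped_path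
  refine ⟨flatData w₁, flatData w₂, flatData w₃, ?_, by simp only [flatData_append], ?_⟩
  · exact flatData_ne_nil hev (by simpa using hne)
  · exact ⟨w₁ ++ w₂ ++ w₂ ++ w₃, ⟨q₀, hq₀, qₘ, hqₘ, hpump⟩, by simp only [flatData_append]⟩
end

section
/- Let S be an EP-EFA with secret states Q_s ⊆ Q, non-secret states Q_ns ⊆ Q, and static observation function θ, and let Sʳ = (Q, Σ, X, Q₀ʳ, Tʳ) with Q₀ʳ = Q be its reverse. Then S is infinite-step opaque w.r.t. Q_s, Q_ns and θ if and only if for every w ∈ Θ(S) and every ŵʳ ∈ Θ(Sʳ): Est^S(w) ∩ Est^{Sʳ}(ŵʳ) ∩ Q_s ≠ ∅ implies Est^S(w) ∩ Est^{Sʳ}(ŵʳ) ∩ Q_ns ≠ ∅. -/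
attribute [local instance] Classical.propDecidable

universe u v w

variable {Q : Type u} {E : Type v} {X : Type w}

lemma path_append {S : EPEFA Q E X} {q q' q'' : Q} {u v : List (E × List X)}
    (h1 : S.Path q u q') (h2 : S.Path q' v q'') : S.Path q (u ++ v) q'' := by
  induction h1 with
  | nil => simpa using h2
  | cons hs _ ih => exact EPEFA.Path.cons hs (ih h2)

lemma step_rev {S : EPEFA Q E X} {q q' : Q} {ev : E × List X}
    (h : S.Step q ev q') : S.rev.Step q' (ev.1, ev.2.reverse) q := by
  obtain ⟨t, ht, hs, htg, htag, hg⟩ := h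
  exact ⟨t.rev, ⟨t, ht, rfl⟩, htg, hs, htag, by simpa [SymTrans.rev] using hg⟩

lemma rev_step {S : EPEFA Q E X} {q q' : Q} {ev : E × List X}
    (h : S.rev.Step q ev q') : S.Step q' (ev.1, ev.2.reverse) q := by
  obtain ⟨t, ht, hs, htg, htag, hg⟩ := h
  obtain ⟨t', ht', rfl⟩ := ht
  exact ⟨t', ht', htg, hs, htag, by simpa [SymTrans.rev] using hg⟩

lemma path_rev {S : EPEFA Q E X} {q q' : Q} {u : List (E × List X)}
    (h : S.Path q u q') : S.rev.Path q' (strRev u) q := by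
  induction h with
  | nil => exact EPEFA.Path.nil _
  | @cons a b c ev u hs _ ih =>
      have : strRev (ev :: u) = strRev u ++ [(ev.1, ev.2.reverse)] := by
        simp [strRev]
      rw [this]
      exact path_append ih (EPEFA.Path.cons (step_rev hs) (EPEFA.Path.nil _))

lemma rev_path {S : EPEFA Q E X} {q q' : Q} {u : List (E × List X)}
    (h : S.rev.Path q u q') : S.Path q' (strRev u) q := by
  induction h with
  | nil => exact EPEFA.Path.nil _
  | @cons a b c ev u hs _ ih =>
      have : strRev (ev :: u) = strRev u ++ [(ev.1, ev.2.reverse)] := by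
        simp [strRev]
      rw [this]
      exact path_append ih (EPEFA.Path.cons (rev_step hs) (EPEFA.Path.nil _))

lemma obsRev_obsRev (w : List (List X)) : obsRev (obsRev w) = w := by
  simp [obsRev, List.map_reverse, List.map_map, Function.comp]

lemma filter_ne_map_reverse (L : List (List X)) :
    (L.map List.reverse).filter (fun l => l ≠ []) =
      (L.filter fun l => l ≠ []).map List.reverse := by
  rw [List.filter_map]
  congr 1
  apply List.filter_congr
  intro l _; simp

lemma obs_strRev (ϑ : Set X) (u : List (E × List X)) :
    obsOf ϑ (strRev u) = obsRev (obsOf ϑ u) := by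
  simp only [obsOf, strRev, obsRev, List.map_reverse, List.map_map,
    List.filter_reverse, List.reverse_inj]
  have : ((fun l => List.filter (fun a => decide (a ∈ ϑ)) l) ∘ Prod.snd ∘
      fun ev : E × List X => (ev.1, ev.2.reverse)) =
      List.reverse ∘ (fun l => List.filter (fun a => decide (a ∈ ϑ)) l) ∘ Prod.snd := by
    funext ev
    simp [Function.comp, List.filter_reverse]
  rw [this, ← List.map_map, filter_ne_map_reverse]

/-- An EP-EFA `S` is infinite-step opaque w.r.t. secret states `Qs`, non-secret
states `Qns` and the static observation function determined by `ϑ` iff for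
every `w ∈ Θ(S)` and every `wr ∈ Θ(Sʳ)`:
`Est^S(w) ∩ Est^{Sʳ}(wr) ∩ Qs ≠ ∅` implies
`Est^S(w) ∩ Est^{Sʳ}(wr) ∩ Qns ≠ ∅`. -/
theorem infso_iff_two_way_estimation (S : EPEFA Q E X) (ϑ : Set X)
    (Qs Qns : Set Q) :
    S.InfSOpaque ϑ Qs Qns ↔
      ∀ w ∈ S.ThetaSet ϑ, ∀ wr ∈ S.rev.ThetaSet ϑ,
        S.Est ϑ w ∩ S.rev.Est ϑ wr ∩ Qs ≠ ∅ →
        S.Est ϑ w ∩ S.rev.Est ϑ wr ∩ Qns ≠ ∅ := by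
  constructor
  · intro hop w _ wr _ hne
    rw [← Set.nonempty_iff_ne_empty] at hne ⊢
    obtain ⟨qs, ⟨⟨q0, hq0, u, hu, hobs⟩, ⟨q1, _, u', hu', hobs'⟩⟩, hqs⟩ := hne
    have hsuf : S.Path qs (strRev u') q1 := rev_path hu'
    obtain ⟨q0', hq0', qn, hqn, q', v, v2, hv, hv2, hov, hov2⟩ :=
      hop q0 hq0 qs hqs q1 u (strRev u') hu hsuf
    refine ⟨qn, ⟨⟨q0', hq0', v, hv, hov ▸ hobs⟩,
      ⟨q', trivial, strRev v2, path_rev hv2, ?_⟩⟩, hqn⟩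
    rw [obs_strRev, ← hov2, obs_strRev, obsRev_obsRev, hobs']
  · intro h q0 hq0 qs hqs q u u2 hu hu2
    have hw : obsOf ϑ u ∈ S.ThetaSet ϑ := ⟨u, ⟨q0, hq0, qs, trivial, hu⟩, rfl⟩
    have hwr : obsOf ϑ (strRev u2) ∈ S.rev.ThetaSet ϑ :=
      ⟨strRev u2, ⟨q, trivial, qs, trivial, path_rev hu2⟩, rfl⟩
    have hne : S.Est ϑ (obsOf ϑ u) ∩ S.rev.Est ϑ (obsOf ϑ (strRev u2)) ∩ Qs ≠ ∅ := by
      rw [← Set.nonempty_iff_ne_empty]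
      exact ⟨qs, ⟨⟨q0, hq0, u, hu, rfl⟩, ⟨q, trivial, strRev u2, path_rev hu2, rfl⟩⟩, hqs⟩
    have := h _ hw _ hwr hne
    rw [← Set.nonempty_iff_ne_empty] at this
    obtain ⟨qn, ⟨⟨q0', hq0', v, hv, hov⟩, ⟨q1, _, v', hv', hov'⟩⟩, hqn⟩ := this
    refine ⟨q0', hq0', qn, hqn, q1, v, strRev v', hv, rev_path hv', hov.symm, ?_⟩
    rw [obs_strRev, hov', obs_strRev, obsRev_obsRev]
end
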